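/- Let X_t = e^{B_t − t/2} be exponential Brownian motion with X_0 = 1. Then for any x ≥ 0 and T > 0, E[(X_T − x)^+] = (1 − x)^+ + (x²/2) ∫₀^T p_t(x) dt, where p_t is the density of X_t. -/

import Mathlib

open Real MeasureTheory ProbabilityTheory

/-- The lognormal density of exponential Brownian motion at time `t`. -/
noncomputable def ebmDensity (t x : ℝ) : ℝ :=
  (1 / Real.sqrt (2 * Real.pi)) * (Real.exp (-t / 8) / Real.sqrt t) *
    (Real.exp (-(Real.log x) ^ 2 / (2 * t)) / x ^ ((3 : ℝ) / 2))

/-!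
For `Z ~ N(-t/2, t)` the price `E[(e^Z - x)⁺]` is the Black–Scholes formula
`C(t) = Ψ(d₋) - x Ψ(d₊)` with `d± = log x / √t ± √t / 2`, where `Ψ` is the standard Gaussian
tail and `φ = -Ψ'` its density.
Since `φ(d₋) = x φ(d₊)`, the two terms of `C'(t)` combine to `x φ(d₊) / (2√t)`, which is
`(x² / 2) p_t(x)`; and `C(t) → (1 - x)⁺` as `t → 0⁺`, because both `d±` tend to `+∞`, `0`
or `-∞` according to the sign of `log x`.
The identity is then the fundamental theorem of calculus on `(0, T]`, the nonnegative
derivative being automatically integrable. For `x = 0` it reduces to `E[e^Z] = 1`.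
-/

open Set Filter Topology
open scoped NNReal

theorem integral_Ioc_eq_sub_of_hasDerivAt_of_tendsto_of_nonneg {f f' : ℝ → ℝ} {a b L : ℝ}
    (hab : a < b) (hderiv : ∀ t ∈ Ioc a b, HasDerivAt f (f' t) t)
    (hf' : ∀ t ∈ Ioo a b, 0 ≤ f' t) (hlim : Tendsto f (𝓝[>] a) (𝓝 L)) :
    ∫ t in Ioc a b, f' t = f b - L := by
  classical
  set g := Function.update f a L
  have hg_deriv : ∀ t ∈ Ioc a b, HasDerivAt g (f' t) t := fun t ht =>
    (hderiv t ht).congr_of_eventuallyEq <| by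
      filter_upwards [eventually_ne_nhds ht.1.ne'] with s hs using Function.update_of_ne hs _ _
  have hg_cont : ContinuousOn g (Icc a b) := by
    intro t ht
    rcases ht.1.eq_or_lt with rfl | hat
    · refine continuousWithinAt_update_same.mpr (hlim.mono_left (nhdsWithin_mono _ ?_))
      exact fun s hs => lt_of_le_of_ne hs.1.1 (Ne.symm hs.2)
    · exact (hg_deriv t ⟨hat, ht.2⟩).continuousAt.continuousWithinAt
  have hg_deriv' : ∀ t ∈ Ioo a b, HasDerivAt g (f' t) t := fun t ht =>
    hg_deriv t (Ioo_subset_Ioc_self ht)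
  rw [← intervalIntegral.integral_of_le hab.le,
    intervalIntegral.integral_eq_sub_of_hasDerivAt_of_le hab.le hg_cont hg_deriv'
      ((intervalIntegrable_iff_integrableOn_Ioc_of_le hab.le).2
        (intervalIntegral.integrableOn_deriv_of_nonneg hg_cont hg_deriv' hf'))]
  simp only [g, Function.update_of_ne hab.ne', Function.update_self]

noncomputable def gaussianTail (y : ℝ) : ℝ := (gaussianReal 0 1).real (Ioi y)

lemma gaussianReal_real_eq_setIntegral (μ : ℝ) {v : ℝ≥0} (hv : v ≠ 0) (s : Set ℝ) :
    (gaussianReal μ v).real s = ∫ z in s, gaussianPDFReal μ v z := by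
  rw [measureReal_def, gaussianReal_apply_eq_integral μ hv,
    ENNReal.toReal_ofReal (integral_nonneg fun _ => gaussianPDFReal_nonneg _ _ _)]

lemma gaussianTail_eq_one_sub_cdf (y : ℝ) : gaussianTail y = 1 - cdf (gaussianReal 0 1) y := by
  rw [gaussianTail, cdf_eq_real, ← compl_Iic, probReal_compl_eq_one_sub measurableSet_Iic]

lemma tendsto_gaussianTail_atTop : Tendsto gaussianTail atTop (𝓝 0) := by
  simpa [funext gaussianTail_eq_one_sub_cdf] using
    (tendsto_cdf_atTop (gaussianReal 0 1)).const_sub 1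

lemma tendsto_gaussianTail_atBot : Tendsto gaussianTail atBot (𝓝 1) := by
  simpa [funext gaussianTail_eq_one_sub_cdf] using
    (tendsto_cdf_atBot (gaussianReal 0 1)).const_sub 1

lemma hasDerivAt_gaussianTail (y : ℝ) : HasDerivAt gaussianTail (-gaussianPDFReal 0 1 y) y := by
  have hint := integrable_gaussianPDFReal 0 1
  have hcont : Continuous (gaussianPDFReal 0 1) := by unfold gaussianPDFReal; fun_prop
  have h : gaussianTail = fun y => gaussianTail 0 - ∫ z in (0 : ℝ)..y, gaussianPDFReal 0 1 z := by
    funext y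
    simp only [gaussianTail, gaussianReal_real_eq_setIntegral 0 one_ne_zero]
    rw [← intervalIntegral.integral_Ioi_sub_Ioi' hint.integrableOn hint.integrableOn,
      sub_sub_cancel]
  rw [h]
  exact (intervalIntegral.integral_hasDerivAt_right hint.intervalIntegrable
    (hcont.stronglyMeasurableAtFilter _ _) hcont.continuousAt).const_sub _

lemma gaussianReal_real_Ioi (μ : ℝ) {v : ℝ≥0} (hv : v ≠ 0) (a : ℝ) :
    (gaussianReal μ v).real (Ioi a) = gaussianTail ((a - μ) / √v) := by
  have hs : 0 < √(v : ℝ) := Real.sqrt_pos.2 (by positivity)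
  have hmap : (gaussianReal 0 1).map ((· + μ) ∘ (√v * ·)) = gaussianReal μ v := by
    rw [← Measure.map_map (by fun_prop) (by fun_prop), gaussianReal_map_const_mul,
      gaussianReal_map_add_const]
    congr 1
    · simp
    · ext; simp [Real.sq_sqrt]
  rw [← hmap, map_measureReal_apply (by fun_prop) measurableSet_Ioi, gaussianTail]
  congr 1
  ext z
  simp [div_lt_iff₀ hs, mul_comm, sub_lt_iff_lt_add]

lemma exp_mul_gaussianPDFReal (μ : ℝ) (v : ℝ≥0) (z : ℝ) :
    exp z * gaussianPDFReal μ v z = exp (μ + v / 2) * gaussianPDFReal (μ + v) v z := by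
  rcases eq_or_ne v 0 with rfl | hv
  · simp [gaussianPDFReal]
  simp only [gaussianPDFReal]
  rw [mul_left_comm, ← exp_add, mul_left_comm (exp _), ← exp_add]
  congr 2
  field_simp
  ring

theorem integral_max_exp_sub_gaussianReal (μ : ℝ) {v : ℝ≥0} (hv : v ≠ 0) {K : ℝ} (hK : 0 < K) :
    ∫ z, max (exp z - K) 0 ∂gaussianReal μ v =
      exp (μ + v / 2) * gaussianTail ((log K - μ - v) / √v) -
        K * gaussianTail ((log K - μ) / √v) := by
  have hpayoff : ∀ z, gaussianPDFReal μ v z • max (exp z - K) 0 = (Ioi (log K)).indicator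
      (fun z => exp (μ + v / 2) * gaussianPDFReal (μ + v) v z - K * gaussianPDFReal μ v z) z := by
    intro z
    rw [smul_eq_mul]
    by_cases hz : log K < z
    · rw [indicator_of_mem (show z ∈ Ioi (log K) from hz),
        max_eq_left (sub_nonneg.2 ((log_lt_iff_lt_exp hK).1 hz).le),
        ← exp_mul_gaussianPDFReal]
      ring
    · rw [indicator_of_notMem (show z ∉ Ioi (log K) from hz),
        max_eq_right (sub_nonpos.2 ((le_log_iff_exp_le hK).1 (not_lt.1 hz))), mul_zero]
  have hint := integrable_gaussianPDFReal
  rw [integral_gaussianReal_eq_integral_smul hv]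
  simp_rw [hpayoff]
  rw [integral_indicator measurableSet_Ioi, integral_sub ((hint _ _).const_mul _).integrableOn
    ((hint _ _).const_mul _).integrableOn, integral_const_mul, integral_const_mul,
    ← gaussianReal_real_eq_setIntegral _ hv, ← gaussianReal_real_eq_setIntegral _ hv,
    gaussianReal_real_Ioi _ hv, gaussianReal_real_Ioi _ hv, sub_add_eq_sub_sub]

lemma integral_exp_gaussianReal (μ : ℝ) (v : ℝ≥0) :
    ∫ z, exp z ∂gaussianReal μ v = exp (μ + v / 2) := by
  simpa [mgf] using congr_fun (mgf_id_gaussianReal (μ := μ) (v := v)) 1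

/-- The Black–Scholes call price with spot `1`, strike `x`, zero rate and total variance `t`. -/
noncomputable def callPrice (x t : ℝ) : ℝ :=
  gaussianTail (log x / √t - √t / 2) - x * gaussianTail (log x / √t + √t / 2)

lemma integral_max_exp_sub_eq_callPrice {x t : ℝ} (hx : 0 < x) (ht : 0 < t) :
    ∫ z, max (exp z - x) 0 ∂gaussianReal (-(t / 2)) t.toNNReal = callPrice x t := by
  have hs : √t ≠ 0 := (Real.sqrt_pos.2 ht).ne'
  have hminus : (log x - -(t / 2) - t) / √t = log x / √t - √t / 2 := by
    field_simp
    rw [Real.sq_sqrt ht.le]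
    ring
  have hplus : (log x - -(t / 2)) / √t = log x / √t + √t / 2 := by
    field_simp
    rw [Real.sq_sqrt ht.le]
    ring
  rw [integral_max_exp_sub_gaussianReal _ (Real.toNNReal_pos.2 ht).ne' hx,
    Real.coe_toNNReal _ ht.le, neg_add_cancel, exp_zero, one_mul, hminus, hplus, callPrice]

lemma gaussianPDFReal_div_sub_half (a : ℝ) {s : ℝ} (hs : s ≠ 0) :
    gaussianPDFReal 0 1 (a / s - s / 2) = exp a * gaussianPDFReal 0 1 (a / s + s / 2) := by
  simp only [gaussianPDFReal, NNReal.coe_one, sub_zero, mul_one]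
  rw [mul_left_comm, ← exp_add]
  congr 2
  field_simp
  ring

lemma ebmDensity_eq {x t : ℝ} (hx : 0 < x) (ht : 0 < t) :
    ebmDensity t x = gaussianPDFReal 0 1 (log x / √t + √t / 2) / (x * √t) := by
  obtain ⟨a, rfl⟩ : ∃ a, exp a = x := ⟨log x, exp_log hx⟩
  have hs : 0 < √t := Real.sqrt_pos.2 ht
  have hexp : exp (-a ^ 2 / (2 * t)) =
      exp (a * (3 / 2)) * exp (-(a / √t + √t / 2) ^ 2 / 2) / (exp (-t / 8) * exp a) := by
    rw [eq_div_iff (by positivity), ← exp_add, ← exp_add, ← exp_add]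
    congr 1
    field_simp
    rw [Real.sq_sqrt ht.le]
    ring
  simp only [ebmDensity, gaussianPDFReal, NNReal.coe_one, sub_zero, mul_one, log_exp,
    ← Real.exp_mul, hexp]
  field_simp

lemma hasDerivAt_callPrice {x t : ℝ} (hx : 0 < x) (ht : 0 < t) :
    HasDerivAt (callPrice x) (x ^ 2 / 2 * ebmDensity t x) t := by
  have hs : 0 < √t := Real.sqrt_pos.2 ht
  have hsqrt := Real.hasDerivAt_sqrt ht.ne'
  have hd : HasDerivAt (fun u => log x / √u) ((0 * √t - log x * (1 / (2 * √t))) / √t ^ 2) t :=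
    (hasDerivAt_const t (log x)).div hsqrt hs.ne'
  have hminus := (hasDerivAt_gaussianTail _).comp t (hd.sub (hsqrt.div_const 2))
  have hplus := (hasDerivAt_gaussianTail _).comp t (hd.add (hsqrt.div_const 2))
  refine (hminus.sub (hplus.const_mul x)).congr_deriv ?_
  simp only [Pi.add_apply, Pi.sub_apply]
  rw [ebmDensity_eq hx ht, gaussianPDFReal_div_sub_half _ hs.ne', exp_log hx]
  field_simp
  ring

lemma tendsto_sqrt_nhdsGT_zero : Tendsto (√·) (𝓝[>] (0 : ℝ)) (𝓝[>] 0) :=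
  tendsto_nhdsWithin_of_tendsto_nhds_of_eventually_within _
    ((Real.continuous_sqrt.tendsto' 0 0 Real.sqrt_zero).mono_left nhdsWithin_le_nhds)
    (eventually_nhdsWithin_of_forall fun _ ht => Real.sqrt_pos.2 ht)

lemma tendsto_mul_nhdsGT_zero (c : ℝ) : Tendsto (fun s => c * s) (𝓝[>] (0 : ℝ)) (𝓝 0) := by
  simpa using ((continuous_const_mul c).tendsto 0).mono_left nhdsWithin_le_nhds

lemma tendsto_div_add_mul_nhdsGT_zero_atTop {a : ℝ} (ha : 0 < a) (c : ℝ) :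
    Tendsto (fun s => a / s + c * s) (𝓝[>] 0) atTop :=
  ((tendsto_inv_nhdsGT_zero.const_mul_atTop ha).atTop_add (tendsto_mul_nhdsGT_zero c)).congr
    fun s => by rw [div_eq_mul_inv]

lemma tendsto_div_add_mul_nhdsGT_zero_atBot {a : ℝ} (ha : a < 0) (c : ℝ) :
    Tendsto (fun s => a / s + c * s) (𝓝[>] 0) atBot :=
  ((tendsto_inv_nhdsGT_zero.const_mul_atTop_of_neg ha).atBot_add (tendsto_mul_nhdsGT_zero c)).congr
    fun s => by rw [div_eq_mul_inv]

lemma tendsto_callPrice {x : ℝ} (hx : 0 < x) :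
    Tendsto (callPrice x) (𝓝[>] 0) (𝓝 (max (1 - x) 0)) := by
  have hcall : callPrice x = (fun s => gaussianTail (log x / s + (-1 / 2) * s) -
      x * gaussianTail (log x / s + 1 / 2 * s)) ∘ (√·) := by
    funext t
    simp only [callPrice, Function.comp_apply]
    ring_nf
  rw [hcall]
  refine Tendsto.comp ?_ tendsto_sqrt_nhdsGT_zero
  rcases lt_trichotomy (log x) 0 with hlog | hlog | hlog
  · have hx1 : x < 1 := (log_neg_iff hx).1 hlog
    have hΨ (c : ℝ) :=
      tendsto_gaussianTail_atBot.comp (tendsto_div_add_mul_nhdsGT_zero_atBot hlog c)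
    have h := (hΨ (-1 / 2)).sub ((hΨ (1 / 2)).const_mul x)
    rw [max_eq_left (by linarith)]
    simpa using h
  · obtain rfl : x = 1 := Real.eq_one_of_pos_of_log_eq_zero hx hlog
    have hcont := (hasDerivAt_gaussianTail 0).continuousAt.tendsto
    simpa using
      (hcont.comp (tendsto_mul_nhdsGT_zero _)).sub (hcont.comp (tendsto_mul_nhdsGT_zero _))
  · have hx1 : 1 < x := (log_pos_iff hx.le).1 hlog
    have hΨ (c : ℝ) :=
      tendsto_gaussianTail_atTop.comp (tendsto_div_add_mul_nhdsGT_zero_atTop hlog c)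
    have h := (hΨ (-1 / 2)).sub ((hΨ (1 / 2)).const_mul x)
    rw [max_eq_right (by linarith)]
    simpa using h

theorem carrJarrow_ebm {x T : ℝ} (hx : 0 ≤ x) (hT : 0 < T) :
    (∫ z : ℝ, max (Real.exp z - x) 0 ∂(gaussianReal (-(T / 2)) T.toNNReal)) =
      max (1 - x) 0 + x ^ 2 / 2 * ∫ t in Set.Ioc (0 : ℝ) T, ebmDensity t x := by
  rcases hx.eq_or_lt with rfl | hx
  · simp [(exp_pos _).le, integral_exp_gaussianReal, Real.coe_toNNReal _ hT.le]
  have hnonneg : ∀ t ∈ Ioo 0 T, 0 ≤ x ^ 2 / 2 * ebmDensity t x := fun t ht => by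
    rw [ebmDensity_eq hx ht.1]
    have := gaussianPDFReal_nonneg 0 1 (log x / √t + √t / 2)
    positivity
  rw [integral_max_exp_sub_eq_callPrice hx hT, ← integral_const_mul,
    integral_Ioc_eq_sub_of_hasDerivAt_of_tendsto_of_nonneg hT
      (fun t ht => hasDerivAt_callPrice hx ht.1) hnonneg (tendsto_callPrice hx)]
  ring
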